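/- Let B ∈ ℝ^{m×d}, let ε₀ ∈ (0, 1/2], and suppose that (1 − ε₀)·‖x‖₂ ≤ ‖Bx‖₂ ≤ (1 + ε₀)·‖x‖₂ for every x ∈ ℝ^d. Let b ∈ ℝ^m and let x* ∈ ℝ^d satisfy Bᵀ(Bx* − b) = 0. Define the gradient-descent iterates by x₁ = 0 and x_{t+1} = x_t − Bᵀ(Bx_t − b). Then for every integer T ≥ 1, ‖Bx_T − b‖₂² ≤ ‖Bx* − b‖₂² + (8ε₀)^{2(T−1)}·‖b‖₂². -/

import Mathlib

/-!
Write `eₜ = xₜ - x*`. Because `Bᵀ(Bx* - b) = 0`, the residual `Bxₜ - b` splits orthogonally into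
`Bx* - b` and `Beₜ`, and the iteration reads `eₜ₊₁ = (I - BᵀB) eₜ`. The operator `I - BᵀB` is
self-adjoint with Rayleigh quotient `1 - ‖Bx‖² / ‖x‖²`, which the near-isometry bounds by `5ε₀/2`;
so each step shrinks `‖Beₜ‖` by a factor `8ε₀`, starting from `‖Be₁‖ = ‖Bx*‖ ≤ ‖b‖`.
-/

open Matrix Finset

/-- Euclidean norm of a vector in `Fin k → ℝ`. -/
noncomputable def euclNorm {k : ℕ} (v : Fin k → ℝ) : ℝ :=
  Real.sqrt (∑ i, v i ^ 2)

open scoped InnerProductSpace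

namespace ContinuousLinearMap

variable {E F : Type*} [NormedAddCommGroup E] [InnerProductSpace ℝ E]
  [NormedAddCommGroup F] [InnerProductSpace ℝ F]

def IsNearIsometry (A : E →L[ℝ] F) (ε : ℝ) : Prop :=
  ∀ x, (1 - ε) * ‖x‖ ≤ ‖A x‖ ∧ ‖A x‖ ≤ (1 + ε) * ‖x‖

namespace IsNearIsometry

variable {A : E →L[ℝ] F} {ε : ℝ}

theorem abs_norm_apply_sq_sub_norm_sq_le (hA : IsNearIsometry A ε) (hε₀ : 0 ≤ ε)
    (hε : ε ≤ 1 / 2) (x : E) : |‖A x‖ ^ 2 - ‖x‖ ^ 2| ≤ 5 / 2 * ε * ‖x‖ ^ 2 := by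
  obtain ⟨hlow, hupp⟩ := hA x
  have hlow_sq : ((1 - ε) * ‖x‖) ^ 2 ≤ ‖A x‖ ^ 2 :=
    pow_le_pow_left₀ (mul_nonneg (by linarith) (norm_nonneg x)) hlow 2
  have hupp_sq : ‖A x‖ ^ 2 ≤ ((1 + ε) * ‖x‖) ^ 2 := pow_le_pow_left₀ (norm_nonneg _) hupp 2
  rw [abs_le]
  constructor <;> nlinarith [sq_nonneg ‖x‖]

end IsNearIsometry

variable [CompleteSpace E] [CompleteSpace F]

theorem isSymmetric_id_sub_adjoint_comp_self (A : E →L[ℝ] F) :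
    ((ContinuousLinearMap.id ℝ E - adjoint A ∘L A : E →L[ℝ] E) : E →ₗ[ℝ] E).IsSymmetric := by
  intro x y
  simp [inner_sub_left, inner_sub_right, adjoint_inner_left, adjoint_inner_right]

theorem norm_sub_adjoint_apply_apply_le {A : E →L[ℝ] F} {δ : ℝ} (hδ : 0 ≤ δ)
    (hA : ∀ x, |‖A x‖ ^ 2 - ‖x‖ ^ 2| ≤ δ * ‖x‖ ^ 2) (x : E) :
    ‖x - adjoint A (A x)‖ ≤ δ * ‖x‖ := by
  set S : E →L[ℝ] E := ContinuousLinearMap.id ℝ E - adjoint A ∘L A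
  have hS : ‖S‖ ≤ δ := by
    rw [norm_eq_iSup_rayleighQuotient S (isSymmetric_id_sub_adjoint_comp_self A)]
    refine ciSup_le fun y => ?_
    have hSy : ⟪S y, y⟫_ℝ = ‖y‖ ^ 2 - ‖A y‖ ^ 2 := by
      simp [S, inner_sub_left, adjoint_inner_left]
    rw [rayleighQuotient, reApplyInnerSelf_apply, RCLike.re_to_real, hSy, abs_div, abs_sq,
      abs_sub_comm]
    exact div_le_of_le_mul₀ (sq_nonneg _) hδ (hA y)
  calc ‖x - adjoint A (A x)‖ = ‖S x‖ := rfl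
    _ ≤ ‖S‖ * ‖x‖ := S.le_opNorm x
    _ ≤ δ * ‖x‖ := by gcongr

namespace IsNearIsometry

variable {A : E →L[ℝ] F} {ε : ℝ}

theorem norm_apply_sub_adjoint_apply_apply_le (hA : IsNearIsometry A ε) (hε₀ : 0 ≤ ε)
    (hε : ε ≤ 1 / 2) (x : E) : ‖A (x - adjoint A (A x))‖ ≤ 8 * ε * ‖A x‖ := by
  have hcontr : ‖x - adjoint A (A x)‖ ≤ 5 / 2 * ε * ‖x‖ :=
    norm_sub_adjoint_apply_apply_le (by positivity) (hA.abs_norm_apply_sq_sub_norm_sq_le hε₀ hε) x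
  have hx : ‖x‖ ≤ 2 * ‖A x‖ := by nlinarith [(hA x).1, norm_nonneg x]
  calc ‖A (x - adjoint A (A x))‖ ≤ (1 + ε) * ‖x - adjoint A (A x)‖ := (hA _).2
    _ ≤ (1 + ε) * (5 / 2 * ε * ‖x‖) := by gcongr
    _ ≤ (1 + ε) * (5 / 2 * ε * (2 * ‖A x‖)) := by gcongr
    _ ≤ 8 * ε * ‖A x‖ := by nlinarith [mul_nonneg hε₀ (norm_nonneg (A x))]

end IsNearIsometry

variable {A : E →L[ℝ] F} {b : F} {xs : E}

theorem norm_apply_sub_sq_eq_of_adjoint_apply_sub_eq_zero (hxs : adjoint A (A xs - b) = 0)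
    (x : E) : ‖A x - b‖ ^ 2 = ‖A xs - b‖ ^ 2 + ‖A (x - xs)‖ ^ 2 := by
  have horth : ⟪A xs - b, A (x - xs)⟫_ℝ = 0 := by rw [← adjoint_inner_left, hxs, inner_zero_left]
  have hdecomp : A x - b = (A xs - b) + A (x - xs) := by rw [map_sub]; abel
  rw [hdecomp, norm_add_sq_real, horth, mul_zero, add_zero]

theorem norm_apply_le_of_adjoint_apply_sub_eq_zero (hxs : adjoint A (A xs - b) = 0) :
    ‖A xs‖ ≤ ‖b‖ := by
  have h := norm_apply_sub_sq_eq_of_adjoint_apply_sub_eq_zero hxs 0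
  rw [map_zero, zero_sub, zero_sub, map_neg, norm_neg, norm_neg] at h
  exact le_of_sq_le_sq (by nlinarith [sq_nonneg ‖A xs - b‖]) (norm_nonneg b)

theorem norm_apply_iterate_sub_le {ε : ℝ} (hA : IsNearIsometry A ε) (hε₀ : 0 ≤ ε)
    (hε : ε ≤ 1 / 2) (hxs : adjoint A (A xs - b) = 0) {x : ℕ → E} (hx₀ : x 0 = 0)
    (hx : ∀ t, x (t + 1) = x t - adjoint A (A (x t) - b)) (T : ℕ) :
    ‖A (x T - xs)‖ ≤ (8 * ε) ^ T * ‖b‖ := by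
  induction T with
  | zero =>
    simpa [hx₀] using norm_apply_le_of_adjoint_apply_sub_eq_zero hxs
  | succ t ih =>
    have herr : x (t + 1) - xs = (x t - xs) - adjoint A (A (x t - xs)) := by
      have hres : A (x t) - b = A (x t - xs) + (A xs - b) := by rw [map_sub]; abel
      rw [hx t, hres, map_add, hxs, add_zero]
      abel
    calc ‖A (x (t + 1) - xs)‖ ≤ 8 * ε * ‖A (x t - xs)‖ := by
          rw [herr]; exact hA.norm_apply_sub_adjoint_apply_apply_le hε₀ hε _
      _ ≤ 8 * ε * ((8 * ε) ^ t * ‖b‖) := by gcongr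
      _ = (8 * ε) ^ (t + 1) * ‖b‖ := by ring

theorem norm_apply_iterate_sub_sq_le {ε : ℝ} (hA : IsNearIsometry A ε) (hε₀ : 0 ≤ ε)
    (hε : ε ≤ 1 / 2) (hxs : adjoint A (A xs - b) = 0) {x : ℕ → E} (hx₀ : x 0 = 0)
    (hx : ∀ t, x (t + 1) = x t - adjoint A (A (x t) - b)) (T : ℕ) :
    ‖A (x T) - b‖ ^ 2 ≤ ‖A xs - b‖ ^ 2 + (8 * ε) ^ (2 * T) * ‖b‖ ^ 2 := by
  rw [norm_apply_sub_sq_eq_of_adjoint_apply_sub_eq_zero hxs, pow_mul', ← mul_pow]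
  gcongr
  exact norm_apply_iterate_sub_le hA hε₀ hε hxs hx₀ hx T

end ContinuousLinearMap

theorem euclNorm_eq_norm_toLp {k : ℕ} (v : Fin k → ℝ) :
    euclNorm v = ‖(WithLp.toLp 2 v : EuclideanSpace ℝ (Fin k))‖ := by
  simp [euclNorm, EuclideanSpace.norm_eq]

theorem adjoint_toContinuousLinearMap_toEuclideanLin_toLp {m n : Type*} [Fintype m]
    [DecidableEq m] [Fintype n] [DecidableEq n] (B : Matrix m n ℝ) (u : m → ℝ) :
    ContinuousLinearMap.adjoint (toEuclideanLin B).toContinuousLinearMap (WithLp.toLp 2 u) =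
      WithLp.toLp 2 (Bᵀ *ᵥ u) := by
  rw [← LinearMap.adjoint_toContinuousLinearMap, ← toEuclideanLin_conjTranspose_eq_adjoint,
    conjTranspose_eq_transpose_of_trivial]
  rfl

theorem stmt_16 (m d : ℕ) (B : Matrix (Fin m) (Fin d) ℝ) (ε₀ : ℝ)
    (hε₀ : 0 < ε₀) (hε₀' : ε₀ ≤ 1 / 2)
    (hB : ∀ x : Fin d → ℝ,
      (1 - ε₀) * euclNorm x ≤ euclNorm (B *ᵥ x) ∧
      euclNorm (B *ᵥ x) ≤ (1 + ε₀) * euclNorm x)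
    (b : Fin m → ℝ) (xstar : Fin d → ℝ)
    (hstar : Bᵀ *ᵥ (B *ᵥ xstar - b) = 0)
    (x : ℕ → Fin d → ℝ) (hx1 : x 1 = 0)
    (hrec : ∀ t : ℕ, 1 ≤ t → x (t + 1) = x t - Bᵀ *ᵥ (B *ᵥ x t - b)) :
    ∀ T : ℕ, 1 ≤ T →
      euclNorm (B *ᵥ x T - b) ^ 2 ≤
        euclNorm (B *ᵥ xstar - b) ^ 2 + (8 * ε₀) ^ (2 * (T - 1)) * euclNorm b ^ 2 := by
  intro T hT
  obtain ⟨n, rfl⟩ := Nat.exists_eq_add_of_le' hT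
  set A := (toEuclideanLin B).toContinuousLinearMap
  have hA (v : Fin d → ℝ) : A (WithLp.toLp 2 v) = WithLp.toLp 2 (B *ᵥ v) := rfl
  have hAadj (u : Fin m → ℝ) :
      ContinuousLinearMap.adjoint A (WithLp.toLp 2 u) = WithLp.toLp 2 (Bᵀ *ᵥ u) :=
    adjoint_toContinuousLinearMap_toEuclideanLin_toLp B u
  have hnear : A.IsNearIsometry ε₀ := fun v => by
    simpa only [euclNorm_eq_norm_toLp, ← hA, WithLp.toLp_ofLp] using hB (WithLp.ofLp v)
  have hxs : ContinuousLinearMap.adjoint A (A (WithLp.toLp 2 xstar) - WithLp.toLp 2 b) = 0 := by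
    simpa [hA, hAadj, mulVec_sub] using congrArg (WithLp.toLp 2) hstar
  let y (t : ℕ) : EuclideanSpace ℝ (Fin d) := WithLp.toLp 2 (x (t + 1))
  have hy₀ : y 0 = 0 := by simp [y, hx1]
  have hy (t : ℕ) :
      y (t + 1) = y t - ContinuousLinearMap.adjoint A (A (y t) - WithLp.toLp 2 b) := by
    simp [y, hrec (t + 1) (by omega), hA, hAadj, mulVec_sub]
  have key := A.norm_apply_iterate_sub_sq_le hnear hε₀.le hε₀' hxs hy₀ hy n
  simpa [euclNorm_eq_norm_toLp, y, hA] using key
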